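/- arXiv:1409.8335 — 3 statements merged into one kernel-verified Lean document; each statement's English description precedes it below -/
import Mathlib

section
/- An ideal I on ω is weakly Ramsey if and only if for every decreasing sequence (X_n)_{n∈ω} of sets in the dual filter I* there exists an increasing function f: ω → ω with I-positive range and such that f(n+1) ∈ X_{f(n)} for each n ∈ ω. -/
open Set

/-- `I` is an ideal on `α`: closed under subsets and finite unions,
contains all finite sets, and is not all of `P(α)`. -/
def IsIdealOn {α : Type*} (I : Set (Set α)) : Prop :=
  (∀ A ∈ I, ∀ B : Set α, B ⊆ A → B ∈ I) ∧
  (∀ A ∈ I, ∀ B ∈ I, A ∪ B ∈ I) ∧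
  (∀ A : Set α, A.Finite → A ∈ I) ∧
  (Set.univ : Set α) ∉ I

/-- Generator of the first type of `WR`: a vertical line. -/
def WRgen1 (S : Set (ℕ × ℕ)) : Prop := ∃ i, S = {p : ℕ × ℕ | p.1 = i}

/-- Generator of the second type of `WR`. -/
def WRgen2 (S : Set (ℕ × ℕ)) : Prop :=
  ∀ p ∈ S, ∀ q ∈ S, p ≠ q → p.1 > q.1 + q.2 ∨ q.1 > p.1 + p.2

/-- The ideal `WR`: sets covered by finitely many generators. -/
def WR : Set (Set (ℕ × ℕ)) :=
  {A | ∃ C : Finset (Set (ℕ × ℕ)), (∀ S ∈ C, WRgen1 S ∨ WRgen2 S) ∧ A ⊆ ⋃₀ ↑C}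

/-- Generator of `ED↑`: a vertical line or the graph of a nondecreasing function. -/
def EDgen (S : Set (ℕ × ℕ)) : Prop :=
  (∃ i, S = {p : ℕ × ℕ | p.1 = i}) ∨
  (∃ f : ℕ → ℕ, Monotone f ∧ S = {p : ℕ × ℕ | p.2 = f p.1})

/-- The ideal `ED↑`. -/
def EDup : Set (Set (ℕ × ℕ)) :=
  {A | ∃ C : Finset (Set (ℕ × ℕ)), (∀ S ∈ C, EDgen S) ∧ A ⊆ ⋃₀ ↑C}

/-- A tree of finite sequences: closed under taking prefixes. -/
def IsTree {α : Type*} (T : Set (List α)) : Prop :=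
  ∀ s ∈ T, ∀ t : List α, t <+: s → t ∈ T

/-- `I` is weakly Ramsey: every (nonempty) tree all of whose ramifications
belong to the dual filter `I*` has a branch with `I`-positive range. -/
def WeaklyRamsey {α : Type*} (I : Set (Set α)) : Prop :=
  ∀ T : Set (List α), ([] : List α) ∈ T → IsTree T →
    (∀ s ∈ T, {x : α | s ++ [x] ∈ T}ᶜ ∈ I) →
    ∃ b : ℕ → α, (∀ k, (List.range k).map b ∈ T) ∧ Set.range b ∉ I

/-- `(X n)` is a partition of `α`. -/
def IsPartition {α : Type*} (X : ℕ → Set α) : Prop :=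
  (∀ m n, m ≠ n → Disjoint (X m) (X n)) ∧ (⋃ n, X n) = Set.univ

/-- `S` is a selector: it meets each piece in at most one point. -/
def IsSelector {α : Type*} (X : ℕ → Set α) (S : Set α) : Prop :=
  ∀ n, (S ∩ X n).Subsingleton

/-- Locally selective: every partition into sets from `I` has an `I`-positive selector. -/
def LocallySelective {α : Type*} (I : Set (Set α)) : Prop :=
  ∀ X : ℕ → Set α, IsPartition X → (∀ n, X n ∈ I) →
    ∃ S : Set α, IsSelector X S ∧ S ∉ I

/-- Weakly selective. -/
def WeaklySelective {α : Type*} (I : Set (Set α)) : Prop :=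
  ∀ X : ℕ → Set α, IsPartition X → {n | X n ∉ I}.Subsingleton →
    (∀ n, (⋃ m, ⋃ _ : n ≤ m, X m) ∉ I) →
    ∃ S : Set α, IsSelector X S ∧ S ∉ I


/-! If `I` is weakly Ramsey and `(X n)` is given, apply the definition to the tree of
sequences `s` with `s i < s (i+1) ∈ X (s i)`: its ramification at a nonempty `s` is
`X (last s)` minus an initial segment, hence in `I*`. Conversely, given a tree `T`, let
`X n` be the intersection of the ramifications of the finitely many nodes of `T` of length
and entries at most `n`. For `f` as in the statement, the first `k` terms of
`(f 1, f 2, …)` form such a node for `n = f k`, so `f (k+1) ∈ X (f k)` extends it inside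
`T`, and `(f 1, f 2, …)` is a branch of `T` with `I`-positive range. -/

namespace IsIdealOn

variable {α : Type*} {I : Set (Set α)}

lemma mono (hI : IsIdealOn I) {A B : Set α} (hA : A ∈ I) (hBA : B ⊆ A) : B ∈ I :=
  hI.1 A hA B hBA

lemma union_mem (hI : IsIdealOn I) {A B : Set α} (hA : A ∈ I) (hB : B ∈ I) : A ∪ B ∈ I :=
  hI.2.1 A hA B hB

lemma finite_mem (hI : IsIdealOn I) {A : Set α} (hA : A.Finite) : A ∈ I :=
  hI.2.2.1 A hA

lemma insert_mem (hI : IsIdealOn I) (a : α) {A : Set α} (hA : A ∈ I) : insert a A ∈ I :=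
  hI.union_mem (hI.finite_mem (finite_singleton a)) hA

lemma biUnion_mem (hI : IsIdealOn I) {ι : Type*} {s : Set ι} (hs : s.Finite) {A : ι → Set α}
    (hA : ∀ i ∈ s, A i ∈ I) : ⋃ i ∈ s, A i ∈ I := by
  induction s, hs using Set.Finite.induction_on with
  | empty => simpa using hI.finite_mem finite_empty
  | @insert i s _ _ ih =>
    rw [biUnion_insert]
    exact hI.union_mem (hA i (mem_insert i s)) (ih fun j hj => hA j (mem_insert_of_mem i hj))

end IsIdealOn

def ramification {α : Type*} (T : Set (List α)) (s : List α) : Set α := {x | s ++ [x] ∈ T}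

section Chains

variable {α : Type*} {R : α → α → Prop}

lemma isTree_setOf_isChain : IsTree {s : List α | s.IsChain R} :=
  fun _ hs _ ht => hs.prefix ht

lemma ramification_setOf_isChain {s : List α} (hs : s.IsChain R) :
    ramification {s | s.IsChain R} s = {x | ∀ a ∈ s.getLast?, R a x} := by
  ext x
  simp [ramification, List.isChain_append, hs]

lemma isChain_map_range_iff {b : ℕ → α} :
    (∀ k, ((List.range k).map b).IsChain R) ↔ ∀ n, R (b n) (b (n + 1)) := by
  simp only [List.isChain_map, List.isChain_range]
  exact ⟨fun h n => h (n + 2) n (by omega), fun h _ n _ => h n⟩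

lemma WeaklyRamsey.exists_chain {I : Set (Set α)} (hWR : WeaklyRamsey I) (hI : IsIdealOn I)
    (hR : ∀ a, {x | R a x}ᶜ ∈ I) :
    ∃ b : ℕ → α, (∀ n, R (b n) (b (n + 1))) ∧ range b ∉ I := by
  have hram : ∀ s ∈ {s : List α | s.IsChain R}, (ramification {s | s.IsChain R} s)ᶜ ∈ I := by
    intro s hs
    rw [ramification_setOf_isChain hs]
    cases s.getLast? with
    | none => simpa using hI.finite_mem finite_empty
    | some a => simpa using hR a
  obtain ⟨b, hb, hpos⟩ := hWR _ List.isChain_nil isTree_setOf_isChain hram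
  exact ⟨b, isChain_map_range_iff.1 hb, hpos⟩

end Chains

lemma Set.Finite.setOf_length_le_and_forall_mem {α : Type*} {S : Set α} (hS : S.Finite) (m : ℕ) :
    {l : List α | l.length ≤ m ∧ ∀ x ∈ l, x ∈ S}.Finite := by
  have := hS.to_subtype
  refine ((List.finite_length_le S m).image (List.map Subtype.val)).subset ?_
  rintro l ⟨hl, hlS⟩
  exact ⟨l.pmap Subtype.mk hlS, by simpa using hl, by simp [List.map_pmap]⟩

section Tree

variable (T : Set (List ℕ))

def boundedNodes (n : ℕ) : Set (List ℕ) := {s | s ∈ T ∧ s.length ≤ n ∧ ∀ x ∈ s, x ≤ n}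

def commonRamification (n : ℕ) : Set ℕ := ⋂ s ∈ boundedNodes T n, ramification T s

lemma finite_boundedNodes (n : ℕ) : (boundedNodes T n).Finite :=
  ((finite_Iic n).setOf_length_le_and_forall_mem n).subset fun _ hs => hs.2

lemma antitone_commonRamification : Antitone (commonRamification T) := by
  intro m n hmn
  refine biInter_subset_biInter_left ?_
  rintro s ⟨hsT, hlen, hle⟩
  exact ⟨hsT, hlen.trans hmn, fun x hx => (hle x hx).trans hmn⟩

lemma compl_commonRamification_mem {I : Set (Set ℕ)} (hI : IsIdealOn I)
    (hT : ∀ s ∈ T, (ramification T s)ᶜ ∈ I) (n : ℕ) : (commonRamification T n)ᶜ ∈ I := by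
  rw [commonRamification, compl_iInter₂]
  exact hI.biUnion_mem (finite_boundedNodes T n) fun s hs => hT s hs.1

lemma map_range_mem_of_mem_commonRamification (hT : [] ∈ T) {f : ℕ → ℕ} (hf : StrictMono f)
    (hstep : ∀ n, f (n + 1) ∈ commonRamification T (f n)) (k : ℕ) :
    (List.range k).map (fun n => f (n + 1)) ∈ T := by
  induction k with
  | zero => simpa using hT
  | succ k ih =>
    have hbounded : (List.range k).map (fun n => f (n + 1)) ∈ boundedNodes T (f k) := by
      refine ⟨ih, by simpa using hf.le_apply, ?_⟩
      simp only [List.mem_map, List.mem_range, forall_exists_index, and_imp]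
      rintro _ i hi rfl
      exact hf.monotone hi
    rw [List.range_succ, List.map_append]
    exact mem_iInter₂.1 (hstep k) _ hbounded

end Tree

theorem weaklyRamsey_iff_decreasing (I : Set (Set ℕ)) (hI : IsIdealOn I) :
    WeaklyRamsey I ↔
    ∀ X : ℕ → Set ℕ, (∀ n, X (n + 1) ⊆ X n) → (∀ n, (X n)ᶜ ∈ I) →
      ∃ f : ℕ → ℕ, StrictMono f ∧ Set.range f ∉ I ∧ ∀ n, f (n + 1) ∈ X (f n) := by
  constructor
  · intro hWR X _ hX
    have hR : ∀ a, {x | a < x ∧ x ∈ X a}ᶜ ∈ I := fun a =>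
      hI.mono (hI.union_mem (hI.finite_mem (finite_Iic a)) (hX a)) fun x hx =>
        (le_or_gt x a).imp_right fun hax hxX => hx ⟨hax, hxX⟩
    obtain ⟨f, hf, hpos⟩ := hWR.exists_chain hI hR
    exact ⟨f, strictMono_nat_of_lt_succ fun n => (hf n).1, hpos, fun n => (hf n).2⟩
  · intro h T hT _ hram
    obtain ⟨f, hf, hpos, hstep⟩ := h (commonRamification T)
      (fun n => antitone_commonRamification T n.le_succ) (compl_commonRamification_mem T hI hram)
    refine ⟨_, map_range_mem_of_mem_commonRamification T hT hf hstep, fun hmem => hpos ?_⟩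
    refine hI.mono (hI.insert_mem (f 0) hmem) ?_
    rintro _ ⟨_ | n, rfl⟩
    exacts [mem_insert _ _, mem_insert_of_mem _ ⟨n, rfl⟩]
end

section
/- The ideal WR is not weakly Ramsey: for the coloring λ on [ω×ω]² given by λ({(i,j),(k,l)}) = 0 if k > i+j and 1 if k ≤ i+j (for (i,j) below (k,l) lexicographically), every set {b : λ({a,b}) = 1} belongs to WR for each a, yet every λ-homogeneous set belongs to WR; hence WR fails the partition characterization of weak Ramseyness. -/
open Set

/-- The coloring `λ`: value `1` (true) unless one point "dominates" the other. -/
def lam (p q : ℕ × ℕ) : Bool := !(decide (p.1 > q.1 + q.2 ∨ q.1 > p.1 + p.2))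

/-!
For `a = (i, j)`, `λ(a, b) = 1` forces `b.1 ≤ i + j`, so the `1`-neighbourhood of `a` lies in
finitely many vertical lines, and so does any `1`-homogeneous set (it lies in the
`1`-neighbourhood of any of its points); a `0`-homogeneous set is a generator of the second type.
Weak Ramseyness fails on the tree of finite sequences in which every term dominates all
earlier ones (`p.1 + p.2 < q.1` for `p` before `q`): a node `s` can be extended by every point
to the right of the line `p.1 = Σ_{p ∈ s} (p.1 + p.2)`, yet the range of every branch is a
generator of the second type.
-/

def Dominates (p q : ℕ × ℕ) : Prop := p.1 + p.2 < q.1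

lemma mem_WR_of_subset {A B : Set (ℕ × ℕ)} (h : A ⊆ B) (hB : B ∈ WR) : A ∈ WR := by
  obtain ⟨C, hC, hBC⟩ := hB
  exact ⟨C, hC, h.trans hBC⟩

lemma setOf_fst_le_mem_WR (N : ℕ) : {p : ℕ × ℕ | p.1 ≤ N} ∈ WR := by
  classical
  refine ⟨(Finset.range (N + 1)).image fun i => {p : ℕ × ℕ | p.1 = i}, ?_, ?_⟩
  · simp only [Finset.mem_image]
    rintro S ⟨i, -, rfl⟩
    exact Or.inl ⟨i, rfl⟩
  · intro p hp
    refine mem_sUnion.2 ⟨{q : ℕ × ℕ | q.1 = p.1}, ?_, rfl⟩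
    simpa using ⟨p.1, hp, rfl⟩

lemma mem_WR_of_WRgen2 {S : Set (ℕ × ℕ)} (h : WRgen2 S) : S ∈ WR :=
  ⟨{S}, by simpa using Or.inr h, by simp⟩

lemma lam_eq_true_iff (p q : ℕ × ℕ) : lam p q = true ↔ p.1 ≤ q.1 + q.2 ∧ q.1 ≤ p.1 + p.2 := by
  rw [lam, Bool.not_eq_true', decide_eq_false_iff_not]
  omega

lemma lam_eq_false_iff (p q : ℕ × ℕ) : lam p q = false ↔ p.1 > q.1 + q.2 ∨ q.1 > p.1 + p.2 := by
  rw [lam, Bool.not_eq_false', decide_eq_true_eq]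

lemma setOf_lam_eq_true_mem_WR (a : ℕ × ℕ) : {b : ℕ × ℕ | lam a b = true} ∈ WR :=
  mem_WR_of_subset (fun b hb => ((lam_eq_true_iff a b).1 hb).2) (setOf_fst_le_mem_WR (a.1 + a.2))

lemma mem_WR_of_lam_homogeneous {H : Set (ℕ × ℕ)} {c : Bool}
    (hH : ∀ p ∈ H, ∀ q ∈ H, p ≠ q → lam p q = c) : H ∈ WR := by
  cases c with
  | false =>
    exact mem_WR_of_WRgen2 fun p hp q hq hpq => (lam_eq_false_iff p q).1 (hH p hp q hq hpq)
  | true =>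
    rcases H.eq_empty_or_nonempty with rfl | ⟨a, ha⟩
    · exact mem_WR_of_subset (empty_subset _) (setOf_fst_le_mem_WR 0)
    · refine mem_WR_of_subset (fun b hb => ?_) (setOf_lam_eq_true_mem_WR a)
      by_cases hba : b = a
      · subst hba
        simp [lam_eq_true_iff]
      · exact hH a ha b hb (Ne.symm hba)

lemma isTree_setOf_pairwise {α : Type*} (R : α → α → Prop) : IsTree {s : List α | s.Pairwise R} :=
  fun _ hs _ ht => hs.sublist ht.sublist

lemma List.Pairwise.rel_of_map_range {α : Type*} {R : α → α → Prop} {b : ℕ → α}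
    (h : ∀ k, ((List.range k).map b).Pairwise R) {m k : ℕ} (hmk : m < k) : R (b m) (b k) := by
  have hk := h (k + 1)
  rw [List.range_succ, List.map_append, List.pairwise_append] at hk
  exact hk.2.2 _ (List.mem_map_of_mem (List.mem_range.2 hmk)) _ (by simp)

lemma range_mem_WR_of_dominates {b : ℕ → ℕ × ℕ} (hb : ∀ m k, m < k → Dominates (b m) (b k)) :
    range b ∈ WR := by
  refine mem_WR_of_WRgen2 ?_
  rintro _ ⟨m, rfl⟩ _ ⟨k, rfl⟩ hmk
  rcases lt_trichotomy m k with h | rfl | h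
  · exact Or.inr (hb m k h)
  · exact absurd rfl hmk
  · exact Or.inl (hb k m h)

lemma compl_setOf_pairwise_dominates_append_mem_WR (s : List (ℕ × ℕ))
    (hs : s.Pairwise Dominates) :
    {x : ℕ × ℕ | (s ++ [x]).Pairwise Dominates}ᶜ ∈ WR := by
  refine mem_WR_of_subset (fun x hx => ?_) (setOf_fst_le_mem_WR (s.map fun p => p.1 + p.2).sum)
  by_contra hlt
  refine hx (List.pairwise_append.2 ⟨hs, List.pairwise_singleton _ _, fun p hp q hq => ?_⟩)
  rw [List.mem_singleton.1 hq]
  have hp_le_sum : p.1 + p.2 ≤ (s.map fun p => p.1 + p.2).sum :=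
    List.single_le_sum (fun _ _ => Nat.zero_le _) _ (List.mem_map_of_mem hp)
  exact hp_le_sum.trans_lt (not_le.1 hlt)

theorem WR_not_weaklyRamsey :
    (∀ a : ℕ × ℕ, {b : ℕ × ℕ | b ≠ a ∧ lam a b = true} ∈ WR) ∧
    (∀ H : Set (ℕ × ℕ), (∃ c, ∀ p ∈ H, ∀ q ∈ H, p ≠ q → lam p q = c) → H ∈ WR) ∧
    ¬ WeaklyRamsey WR := by
  refine ⟨fun a => mem_WR_of_subset (fun b hb => hb.2) (setOf_lam_eq_true_mem_WR a),
    fun H ⟨_, hH⟩ => mem_WR_of_lam_homogeneous hH, fun hWR => ?_⟩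
  obtain ⟨b, hbranch, hpos⟩ := hWR {s | s.Pairwise Dominates} List.Pairwise.nil
    (isTree_setOf_pairwise Dominates) compl_setOf_pairwise_dominates_append_mem_WR
  exact hpos (range_mem_WR_of_dominates fun _ _ => List.Pairwise.rel_of_map_range hbranch)
end

section
/- There exists an ideal on ω isomorphic to ED↑ which is not Mon, i.e., there is a bijection π: ω → ω×ω and a sequence of reals (x_n) such that for every M ⊆ ω with (x_n)_{n∈M} monotone, π[M] ∈ ED↑. -/
open Set

/-!
Split `ℕ × ℕ` into the L-shaped levels `min p.1 p.2 = m`, each the union of the vertical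
half-line `{(m, y) | m ≤ y}` and the horizontal half-line `{(z, m) | m < z}`. Enumerate `ℕ × ℕ`
shell by shell (`max p.1 p.2`) and give the `n`-th point its level plus, on vertical half-lines, a
small term decreasing in `n`.

Along an antitone subsequence the level is bounded, so finitely many lines cover its image. Along
a monotone one the level is nondecreasing and each vertical half-line is met at most once. Since
shells are listed in order, and each column below the diagonal from the top down, the points on
vertical half-lines and those on horizontal half-lines then form two graphs of partial monotone
functions, which extend to total ones.
-/

lemma EDup_mono {A B : Set (ℕ × ℕ)} (hAB : A ⊆ B) (hB : B ∈ EDup) : A ∈ EDup :=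
  let ⟨C, hC, hBC⟩ := hB
  ⟨C, hC, hAB.trans hBC⟩

lemma EDup_union {A B : Set (ℕ × ℕ)} (hA : A ∈ EDup) (hB : B ∈ EDup) : A ∪ B ∈ EDup := by
  classical
  obtain ⟨C, hC, hAC⟩ := hA
  obtain ⟨D, hD, hBD⟩ := hB
  refine ⟨C ∪ D, fun S hS => (Finset.mem_union.mp hS).elim (hC S) (hD S), ?_⟩
  rw [Finset.coe_union, sUnion_union]
  exact union_subset_union hAC hBD

lemma EDgen.mem_EDup {S : Set (ℕ × ℕ)} (hS : EDgen S) : S ∈ EDup := by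
  refine ⟨{S}, ?_, ?_⟩ <;> simp [hS]

lemma graph_mem_EDup {f : ℕ → ℕ} (hf : Monotone f) : {p : ℕ × ℕ | p.2 = f p.1} ∈ EDup :=
  EDgen.mem_EDup (Or.inr ⟨f, hf, rfl⟩)

lemma exists_monotone_graph_superset {S : Set (ℕ × ℕ)}
    (hS : ∀ p ∈ S, ∀ q ∈ S, p.1 ≤ q.1 → p.2 ≤ q.2) :
    ∃ f : ℕ → ℕ, Monotone f ∧ S ⊆ {p | p.2 = f p.1} := by
  have hfin : ∀ n, (S ∩ {p | p.1 ≤ n}).Finite := fun n =>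
    Finite.of_finite_image ((finite_Iic n).subset (by rintro _ ⟨p, hp, rfl⟩; exact hp.2))
      fun p hp q hq h => Prod.ext h (le_antisymm (hS p hp.1 q hq.1 h.le) (hS q hq.1 p hp.1 h.ge))
  refine ⟨fun n => sSup (Prod.snd '' (S ∩ {p | p.1 ≤ n})), fun m n hmn => ?_, fun p hp => ?_⟩
  · exact csSup_le_csSup' ((hfin n).image _).bddAbove
      (image_mono (inter_subset_inter_right _ fun p hp => le_trans hp hmn))
  · refine (IsGreatest.csSup_eq (s := Prod.snd '' (S ∩ {q | q.1 ≤ p.1}))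
      ⟨⟨p, ⟨hp, le_refl p.1⟩, rfl⟩, ?_⟩).symm
    rintro _ ⟨q, ⟨hq, hqp⟩, rfl⟩
    exact hS q hq p hp hqp

lemma mem_EDup_of_fst_le_imp_snd_le {S : Set (ℕ × ℕ)}
    (hS : ∀ p ∈ S, ∀ q ∈ S, p.1 ≤ q.1 → p.2 ≤ q.2) : S ∈ EDup :=
  let ⟨_, hf, hSf⟩ := exists_monotone_graph_superset hS
  EDup_mono hSf (graph_mem_EDup hf)

def level (p : ℕ × ℕ) : ℕ := min p.1 p.2

lemma setOf_level_eq_mem_EDup (m : ℕ) : {p | level p = m} ∈ EDup := by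
  refine EDup_mono (fun p hp => ?_) (EDup_union (EDgen.mem_EDup (Or.inl ⟨m, rfl⟩))
    (graph_mem_EDup (monotone_const (c := m))))
  change min p.1 p.2 = m at hp
  change p.1 = m ∨ p.2 = m
  omega

lemma setOf_level_le_mem_EDup (K : ℕ) : {p | level p ≤ K} ∈ EDup := by
  induction K with
  | zero => exact EDup_mono (fun p hp => Nat.le_zero.mp hp) (setOf_level_eq_mem_EDup 0)
  | succ K ih =>
    exact EDup_mono (fun p hp => (Nat.le_succ_iff.mp hp).imp id id)
      (EDup_union ih (setOf_level_eq_mem_EDup (K + 1)))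

/-- Composed with `Nat.pair`, this lists each shell `max i j = s` starting with the points
`(s, j)`, `j < s`, in decreasing order of `j`. -/
def shellPerm : ℕ × ℕ ≃ ℕ × ℕ where
  toFun p := if p.2 < p.1 then (p.1 - 1 - p.2, p.1) else (p.2, p.1)
  invFun q := if q.1 < q.2 then (q.2, q.2 - 1 - q.1) else (q.2, q.1)
  left_inv := fun (i, j) => by
    by_cases h : j < i
    · simp only [if_pos h, show i - 1 - j < i by omega, ite_true, Prod.mk.injEq, true_and]
      omega
    · simp only [if_neg h]
  right_inv := fun (a, b) => by
    by_cases h : a < b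
    · simp only [if_pos h, show b - 1 - a < b by omega, ite_true, Prod.mk.injEq, and_true]
      omega
    · simp only [if_neg h]

def enum : ℕ × ℕ ≃ ℕ := shellPerm.trans Nat.pairEquiv

lemma Nat.pair_lt_pair_of_max_lt {a b c d : ℕ} (h : max a b < max c d) :
    Nat.pair a b < Nat.pair c d :=
  calc Nat.pair a b < (max a b + 1) ^ 2 := Nat.pair_lt_max_add_one_sq a b
    _ ≤ max c d ^ 2 := Nat.pow_le_pow_left h 2
    _ ≤ Nat.pair c d := (Nat.le_add_right _ _).trans (Nat.max_sq_add_min_le_pair c d)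

lemma enum_apply (p : ℕ × ℕ) : enum p = Nat.pair (shellPerm p).1 (shellPerm p).2 := rfl

lemma enum_lt_of_max_lt {p q : ℕ × ℕ} (h : max p.1 p.2 < max q.1 q.2) : enum p < enum q := by
  have hmax : ∀ r : ℕ × ℕ, max (shellPerm r).1 (shellPerm r).2 = max r.1 r.2 := fun r => by
    simp only [shellPerm, Equiv.coe_fn_mk]
    split_ifs <;> omega
  rw [enum_apply, enum_apply]
  exact Nat.pair_lt_pair_of_max_lt (by rwa [hmax, hmax])

lemma enum_lt_of_fst_le_of_snd_lt {p q : ℕ × ℕ} (hp : p.2 < p.1) (h₁ : p.1 ≤ q.1) (h₂ : q.2 < p.2) :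
    enum p < enum q := by
  rcases h₁.lt_or_eq with h₁ | h₁
  · exact enum_lt_of_max_lt (by omega)
  · obtain ⟨i, j⟩ := p
    obtain ⟨_, k⟩ := q
    obtain rfl : i = _ := h₁
    simp only [enum_apply, shellPerm, Equiv.coe_fn_mk, if_pos hp, if_pos (h₂.trans hp)]
    exact Nat.pair_lt_pair_left _ (by omega)

lemma mem_EDup_of_enum_le_imp_level_le {A : Set (ℕ × ℕ)}
    (hlevel : ∀ p ∈ A, ∀ q ∈ A, enum p ≤ enum q → level p ≤ level q)
    (hcol : ∀ p ∈ A, ∀ q ∈ A, p.1 ≤ p.2 → q.1 ≤ q.2 → p.1 = q.1 → p = q) : A ∈ EDup := by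
  have hupper : {p ∈ A | p.1 ≤ p.2} ∈ EDup := by
    refine mem_EDup_of_fst_le_imp_snd_le fun p ⟨hpA, hp⟩ q ⟨hqA, hq⟩ hpq => ?_
    by_contra! hlt
    have hqp := hlevel q hqA p hpA (enum_lt_of_max_lt (by omega)).le
    simp only [level] at hqp
    exact hlt.ne' (congrArg Prod.snd (hcol p hpA q hqA hp hq (by omega)))
  have hlower : {p ∈ A | p.2 < p.1} ∈ EDup := by
    refine mem_EDup_of_fst_le_imp_snd_le fun p ⟨hpA, hp⟩ q ⟨hqA, hq⟩ hpq => ?_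
    by_contra! hlt
    have := hlevel p hpA q hqA (enum_lt_of_fst_le_of_snd_lt hp hpq hlt).le
    simp only [level] at this
    omega
  refine EDup_mono (fun p hp => ?_) (EDup_union hupper hlower)
  exact (le_or_gt p.1 p.2).imp (⟨hp, ·⟩) (⟨hp, ·⟩)

noncomputable def levelSeq (n : ℕ) : ℝ :=
  level (enum.symm n) + if (enum.symm n).1 ≤ (enum.symm n).2 then 1 / ((n : ℝ) + 2) else 0

lemma levelSeq_mem_Icc (n : ℕ) :
    levelSeq n ∈ Icc (level (enum.symm n) : ℝ) (level (enum.symm n) + 1 / 2) := by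
  have h₀ : 0 < 1 / ((n : ℝ) + 2) := by positivity
  have h₁ : 1 / ((n : ℝ) + 2) ≤ 1 / 2 := by gcongr; linarith [n.cast_nonneg (α := ℝ)]
  unfold levelSeq
  split_ifs <;> constructor <;> linarith

lemma level_le_of_levelSeq_le {a b : ℕ} (h : levelSeq a ≤ levelSeq b) :
    level (enum.symm a) ≤ level (enum.symm b) := by
  by_contra! hlt
  have hlt' : (level (enum.symm b) : ℝ) + 1 ≤ level (enum.symm a) := by exact_mod_cast hlt
  linarith [(levelSeq_mem_Icc a).1, (levelSeq_mem_Icc b).2]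

lemma levelSeq_lt_of_lt_of_fst_eq {a b : ℕ} (hab : a < b)
    (ha : (enum.symm a).1 ≤ (enum.symm a).2) (hb : (enum.symm b).1 ≤ (enum.symm b).2)
    (h : (enum.symm a).1 = (enum.symm b).1) : levelSeq b < levelSeq a := by
  have hlevel : level (enum.symm a) = level (enum.symm b) := by
    simp only [level]; omega
  simp only [levelSeq, if_pos ha, if_pos hb, hlevel]
  gcongr

lemma image_mem_EDup_of_monotoneOn {M : Set ℕ} (hM : MonotoneOn levelSeq M) :
    enum.symm '' M ∈ EDup := by
  refine mem_EDup_of_enum_le_imp_level_le ?_ ?_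
  · rintro _ ⟨a, ha, rfl⟩ _ ⟨b, hb, rfl⟩ hab
    simp only [Equiv.apply_symm_apply] at hab
    exact level_le_of_levelSeq_le (hM ha hb hab)
  · rintro _ ⟨a, ha, rfl⟩ _ ⟨b, hb, rfl⟩ hpa hpb hfst
    rcases lt_trichotomy a b with hab | rfl | hab
    · exact absurd (hM ha hb hab.le) (levelSeq_lt_of_lt_of_fst_eq hab hpa hpb hfst).not_ge
    · rfl
    · exact absurd (hM hb ha hab.le) (levelSeq_lt_of_lt_of_fst_eq hab hpb hpa hfst.symm).not_ge

lemma image_mem_EDup_of_antitoneOn {M : Set ℕ} (hM : AntitoneOn levelSeq M) :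
    enum.symm '' M ∈ EDup := by
  refine EDup_mono ?_ (setOf_level_le_mem_EDup (level (enum.symm (sInf M))))
  rintro _ ⟨a, ha, rfl⟩
  exact level_le_of_levelSeq_le (hM (Nat.sInf_mem ⟨a, ha⟩) ha (Nat.sInf_le ha))

theorem EDup_iso_not_Mon :
    ∃ (π : ℕ ≃ (ℕ × ℕ)) (x : ℕ → ℝ), ∀ M : Set ℕ,
      (MonotoneOn x M ∨ AntitoneOn x M) → ⇑π '' M ∈ EDup :=
  ⟨enum.symm, levelSeq, fun _ hM =>
    hM.elim image_mem_EDup_of_monotoneOn image_mem_EDup_of_antitoneOn⟩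
end
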